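/- For every complex number q with |q| < 1, the following identity holds: (1+q^3) · Σ_{m≥0} (−q^2; q^2)_m q^{2m} / (q; q^2)_m = q(q^4; q^4)_∞/(q; q)_∞ + 1 − q. -/

import Mathlib

/-!
With `R m = (-q²; q²)_m / (q; q²)_m`, the summand `t m` satisfies
`(1 + q³) t m = F (m + 1) - F m` for `F m = (q - q^{2m}) R m`, so the series telescopes to
`q (-q²; q²)_∞ / (q; q²)_∞ - (q - 1)`. The product side agrees because
`(q⁴; q⁴)_∞ = (q²; q²)_∞ (-q²; q²)_∞` and `(q; q)_∞ = (q; q²)_∞ (q²; q²)_∞`.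
Summability holds since `t m = R m q^{2m}` with `R` convergent.
-/

/-- The finite q-Pochhammer symbol `(a; q)_n = ∏_{j=0}^{n-1} (1 - a q^j)`. -/
noncomputable def qPoch (a q : ℂ) (n : ℕ) : ℂ := ∏ j ∈ Finset.range n, (1 - a * q ^ j)

/-- The infinite q-Pochhammer symbol `(a; q)_∞ = ∏_{j=0}^{∞} (1 - a q^j)`. -/
noncomputable def qPochInf (a q : ℂ) : ℂ := ∏' j : ℕ, (1 - a * q ^ j)

open Filter Topology Finset

section QPochhammer

variable {a w : ℂ}

lemma norm_sq_lt_one (hw : ‖w‖ < 1) : ‖w ^ 2‖ < 1 := by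
  rw [norm_pow]
  exact pow_lt_one₀ (norm_nonneg w) hw two_ne_zero

lemma qPoch_succ (a w : ℂ) (n : ℕ) : qPoch a w (n + 1) = qPoch a w n * (1 - a * w ^ n) :=
  prod_range_succ _ _

lemma summable_norm_mul_pow (a : ℂ) (hw : ‖w‖ < 1) : Summable fun j : ℕ => ‖a * w ^ j‖ := by
  simpa only [norm_mul, norm_pow] using
    (summable_geometric_of_lt_one (norm_nonneg w) hw).mul_left ‖a‖

lemma hasProd_qPochInf (a : ℂ) (hw : ‖w‖ < 1) :
    HasProd (fun j : ℕ => 1 - a * w ^ j) (qPochInf a w) := by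
  have := multipliable_one_add_of_summable (f := fun j : ℕ => -(a * w ^ j))
    (by simpa only [norm_neg] using summable_norm_mul_pow a hw)
  simpa only [qPochInf, ← sub_eq_add_neg] using this.hasProd

lemma tendsto_qPoch_qPochInf (a : ℂ) (hw : ‖w‖ < 1) :
    Tendsto (qPoch a w) atTop (𝓝 (qPochInf a w)) :=
  (hasProd_qPochInf a hw).tendsto_prod_nat

lemma one_sub_mul_pow_ne_zero (ha : ‖a‖ < 1) (hw : ‖w‖ ≤ 1) (j : ℕ) : 1 - a * w ^ j ≠ 0 := by
  refine sub_ne_zero.2 fun h => ?_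
  have : ‖a * w ^ j‖ < 1 := by
    rw [norm_mul, norm_pow]
    exact (mul_le_of_le_one_right (norm_nonneg a) (pow_le_one₀ (norm_nonneg w) hw)).trans_lt ha
  simp [← h] at this

lemma qPoch_ne_zero (ha : ‖a‖ < 1) (hw : ‖w‖ ≤ 1) (n : ℕ) : qPoch a w n ≠ 0 :=
  prod_ne_zero_iff.2 fun j _ => one_sub_mul_pow_ne_zero ha hw j

lemma qPochInf_ne_zero (ha : ‖a‖ < 1) (hw : ‖w‖ < 1) : qPochInf a w ≠ 0 := by
  have := tprod_one_add_ne_zero_of_summable (f := fun j : ℕ => -(a * w ^ j))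
    (fun j => by simpa only [← sub_eq_add_neg] using one_sub_mul_pow_ne_zero ha hw.le j)
    (by simpa only [norm_neg] using summable_norm_mul_pow a hw)
  simpa only [qPochInf, ← sub_eq_add_neg] using this

lemma qPochInf_sq (a : ℂ) (hw : ‖w‖ < 1) :
    qPochInf (a ^ 2) (w ^ 2) = qPochInf a w * qPochInf (-a) w := by
  refine ((hasProd_qPochInf a hw).mul (hasProd_qPochInf (-a) hw)).congr_fun (fun j => ?_)
    |>.tprod_eq
  ring

lemma qPochInf_eq_even_mul_odd (a : ℂ) (hw : ‖w‖ < 1) :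
    qPochInf a w = qPochInf a (w ^ 2) * qPochInf (a * w) (w ^ 2) := by
  have hw2 := norm_sq_lt_one hw
  refine HasProd.tprod_eq <| HasProd.even_mul_odd (f := fun j => 1 - a * w ^ j)
    ((hasProd_qPochInf a hw2).congr_fun fun k => ?_)
    ((hasProd_qPochInf (a * w) hw2).congr_fun fun k => ?_) <;> ring

end QPochhammer

section Telescoping

variable {q : ℂ}

noncomputable def pochRatio (q : ℂ) (m : ℕ) : ℂ := qPoch (-q ^ 2) (q ^ 2) m / qPoch q (q ^ 2) m

lemma one_add_pow_three_mul_summand (m : ℕ) (h : qPoch q (q ^ 2) (m + 1) ≠ 0) :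
    (1 + q ^ 3) * (qPoch (-q ^ 2) (q ^ 2) m * q ^ (2 * m) / qPoch q (q ^ 2) m) =
      (q - q ^ (2 * (m + 1))) * pochRatio q (m + 1) - (q - q ^ (2 * m)) * pochRatio q m := by
  rw [qPoch_succ, mul_ne_zero_iff] at h
  obtain ⟨hD, hx⟩ := h
  simp only [pochRatio, qPoch_succ]
  rw [← pow_mul] at hx ⊢
  field_simp
  ring

lemma one_add_pow_three_mul_partial_sum (h : ∀ n, qPoch q (q ^ 2) n ≠ 0) (N : ℕ) :
    (1 + q ^ 3) * ∑ m ∈ range N, qPoch (-q ^ 2) (q ^ 2) m * q ^ (2 * m) / qPoch q (q ^ 2) m =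
      (q - q ^ (2 * N)) * pochRatio q N - (q - 1) := by
  rw [mul_sum, sum_congr rfl fun m _ => one_add_pow_three_mul_summand m (h (m + 1)),
    sum_range_sub (fun m => (q - q ^ (2 * m)) * pochRatio q m)]
  simp [pochRatio, qPoch]

lemma tendsto_pochRatio (hq : ‖q‖ < 1) :
    Tendsto (pochRatio q) atTop (𝓝 (qPochInf (-q ^ 2) (q ^ 2) / qPochInf q (q ^ 2))) := by
  have hq2 := norm_sq_lt_one hq
  exact (tendsto_qPoch_qPochInf _ hq2).div (tendsto_qPoch_qPochInf _ hq2) (qPochInf_ne_zero hq hq2)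

lemma summable_summand (hq : ‖q‖ < 1) :
    Summable fun m : ℕ => qPoch (-q ^ 2) (q ^ 2) m * q ^ (2 * m) / qPoch q (q ^ 2) m := by
  have hq2 := norm_sq_lt_one hq
  have := (summable_norm_mul_pow 1 hq2).mul_tendsto_const
    (Nat.cofinite_eq_atTop ▸ tendsto_pochRatio hq)
  refine this.congr fun m => ?_
  rw [pochRatio, one_mul, ← pow_mul]
  ring

end Telescoping

theorem stmt_16 (q : ℂ) (hq : ‖q‖ < 1) :
    (1 + q ^ 3) * ∑' m : ℕ, qPoch (-q ^ 2) (q ^ 2) m * q ^ (2 * m) / qPoch q (q ^ 2) m =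
      q * qPochInf (q ^ 4) (q ^ 4) / qPochInf q q + 1 - q := by
  have hq2 := norm_sq_lt_one hq
  have hpartial := ((summable_summand hq).hasSum.mul_left (1 + q ^ 3)).tendsto_sum_nat
  simp only [← mul_sum, one_add_pow_three_mul_partial_sum (qPoch_ne_zero hq hq2.le)] at hpartial
  have hlim : Tendsto (fun N : ℕ => (q - q ^ (2 * N)) * pochRatio q N - (q - 1)) atTop
      (𝓝 ((q - 0) * (qPochInf (-q ^ 2) (q ^ 2) / qPochInf q (q ^ 2)) - (q - 1))) := by
    refine ((tendsto_const_nhds.sub ?_).mul (tendsto_pochRatio hq)).sub_const _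
    simpa only [pow_mul] using tendsto_pow_atTop_nhds_zero_of_norm_lt_one hq2
  rw [tendsto_nhds_unique hpartial hlim, show q ^ 4 = (q ^ 2) ^ 2 by ring, qPochInf_sq _ hq2,
    qPochInf_eq_even_mul_odd q hq, ← sq]
  have hC := qPochInf_ne_zero hq2 hq2
  field_simp
  ring
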